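/- For a binary string b = b_1 ... b_n of length n, let f(b) be the sequence p_1 p_2 ... p_{2n} where the pair p_{2i-1} p_{2i} equals (2i-1)(2i) if b_i = 0 and equals (2i)(2i-1) if b_i = 1; note f(b) is a permutation of {1,...,2n} in one-line notation. Then for all binary strings b, b' of length n with b ≠ b', f(b') is obtained from f(b) by reversing a single contiguous substring if and only if the Hamming distance between b and b' equals 1. -/
import Mathlib


/-- The permutation `f(b) = p_1 ... p_{2n}` of `{1,...,2n}` in one-line notation (as a
function from positions, indexed from 0, to values): the `i`-th pair of positions holds the
values `(2i-1)(2i)` if `b_i = 0` and `(2i)(2i-1)` if `b_i = 1` (1-indexed values). -/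
def pairPerm {n : ℕ} (b : Fin n → Bool) : Fin (2 * n) → ℕ :=
  fun k =>
    if b ⟨(k : ℕ) / 2, by omega⟩ = false then (k : ℕ) + 1
    else if (k : ℕ) % 2 = 0 then (k : ℕ) + 2 else (k : ℕ)

/-- `g` is obtained from `f` by reversing the contiguous segment of entries at positions
`p, p+1, ..., q`, leaving all other positions unchanged. -/
def DiffBySubstringReversal {m : ℕ} (f g : Fin m → ℕ) : Prop :=
  ∃ (p q : ℕ) (_ : p ≤ q) (hq : q < m),
    ∀ r : Fin m, g r =
      if hr : p ≤ (r : ℕ) ∧ (r : ℕ) ≤ q then f ⟨p + q - (r : ℕ), by omega⟩ else f r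

lemma pairPerm_congr {n : ℕ} (b : Fin n → Bool) (k k' : Fin (2 * n)) (h : (k : ℕ) = (k' : ℕ)) :
    pairPerm b k = pairPerm b k' := by
  congr 1; exact Fin.ext h

lemma pairPerm_even {n : ℕ} (b : Fin n → Bool) (i : ℕ) (hi : i < n) :
    pairPerm b ⟨2 * i, by omega⟩ = if b ⟨i, hi⟩ then 2 * i + 2 else 2 * i + 1 := by
  have h2 : 2 * i / 2 = i := by omega
  simp only [pairPerm, h2, Nat.mul_mod_right]
  cases hb : b ⟨i, hi⟩ <;> simp [hb]

lemma pairPerm_odd {n : ℕ} (b : Fin n → Bool) (i : ℕ) (hi : i < n) :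
    pairPerm b ⟨2 * i + 1, by omega⟩ = if b ⟨i, hi⟩ then 2 * i + 1 else 2 * i + 2 := by
  have h2 : (2 * i + 1) / 2 = i := by omega
  have h3 : (2 * i + 1) % 2 = 1 := by omega
  simp only [pairPerm, h2, h3]
  cases hb : b ⟨i, hi⟩ <;> simp [hb]

lemma pairPerm_idx {n : ℕ} (b : Fin n → Bool) (k : Fin (2 * n)) :
    (pairPerm b k - 1) / 2 = (k : ℕ) / 2 := by
  simp only [pairPerm]
  split_ifs with h1 h2 <;> omega

lemma pairPerm_inj {n : ℕ} (b b' : Fin n → Bool)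
    (h : ∀ k : Fin (2 * n), pairPerm b' k = pairPerm b k) : b = b' := by
  funext i
  have hi := i.isLt
  have hk := h ⟨2 * i, by omega⟩
  rw [pairPerm_even b i.val hi, pairPerm_even b' i.val hi] at hk
  simp only [Fin.eta] at hk
  cases hb : b i <;> cases hb' : b' i <;> simp [hb, hb'] at hk ⊢

/-- For binary strings `b ≠ b'` of length `n`, the permutation `f(b')` is
obtained from `f(b)` by reversing a single contiguous substring iff the Hamming distance
between `b` and `b'` equals 1. -/
theorem pairPerm_reversal_iff (n : ℕ) (b b' : Fin n → Bool) (hbb' : b ≠ b') :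
    DiffBySubstringReversal (pairPerm b) (pairPerm b') ↔ hammingDist b b' = 1 := by
  constructor
  · rintro ⟨p, q, hpq, hq, hrev⟩
    by_cases hpq' : p = q
    · exfalso
      apply hbb'
      apply pairPerm_inj b b'
      intro k
      have hk := hrev k
      split_ifs at hk with h
      · rw [hk]
        exact pairPerm_congr b ⟨p + q - (k : ℕ), by omega⟩ k
          (by simp only [Fin.val_mk]; omega)
      · exact hk
    have hplt : p < q := lt_of_le_of_ne hpq hpq'
    have hp2n : p < 2 * n := by omega
    have h1 := hrev ⟨p, hp2n⟩
    rw [dif_pos ⟨le_refl p, le_of_lt hplt⟩] at h1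
    have hA : (pairPerm b' ⟨p, hp2n⟩ - 1) / 2 = p / 2 := pairPerm_idx b' ⟨p, hp2n⟩
    have hB : (pairPerm b' ⟨p, hp2n⟩ - 1) / 2 = (p + q - p) / 2 := by
      rw [h1]; exact pairPerm_idx b _
    have hq1 : q = p + 1 := by omega
    have hp0 : p % 2 = 0 := by omega
    have hin : p / 2 < n := by omega
    have hdiff : b ⟨p / 2, hin⟩ ≠ b' ⟨p / 2, hin⟩ := by
      have e2 : pairPerm b ⟨p + q - p, by omega⟩
          = pairPerm b ⟨2 * (p / 2) + 1, by omega⟩ :=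
        pairPerm_congr b _ _ (by simp only [Fin.val_mk]; omega)
      have e1 : pairPerm b' ⟨p, hp2n⟩ = pairPerm b' ⟨2 * (p / 2), by omega⟩ :=
        pairPerm_congr b' _ _ (by simp only [Fin.val_mk]; omega)
      have h2 := (e1.symm.trans h1).trans e2
      rw [pairPerm_even b' (p / 2) hin, pairPerm_odd b (p / 2) hin] at h2
      cases hb : b ⟨p / 2, hin⟩ <;> cases hb' : b' ⟨p / 2, hin⟩ <;>
        simp [hb, hb'] at h2 ⊢
    have hsame : ∀ j : Fin n, j ≠ ⟨p / 2, hin⟩ → b j = b' j := by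
      intro j hj
      have hji : (j : ℕ) ≠ p / 2 := fun hc => hj (Fin.ext hc)
      have h2 := hrev ⟨2 * (j : ℕ), by omega⟩
      rw [dif_neg (by simp only [Fin.val_mk]; omega)] at h2
      rw [pairPerm_even b j.val j.isLt, pairPerm_even b' j.val j.isLt] at h2
      simp only [Fin.eta] at h2
      cases hb : b j <;> cases hb' : b' j <;> simp [hb, hb'] at h2 ⊢
    simp only [hammingDist]
    rw [Finset.card_eq_one]
    refine ⟨⟨p / 2, hin⟩, ?_⟩
    ext j
    simp only [Finset.mem_filter, Finset.mem_univ, true_and, Finset.mem_singleton]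
    constructor
    · intro hne
      by_contra hc
      exact hne (hsame j hc)
    · rintro rfl; exact hdiff
  · intro h
    simp only [hammingDist] at h
    rw [Finset.card_eq_one] at h
    obtain ⟨a, ha⟩ := h
    have hmem : ∀ j : Fin n, b j ≠ b' j ↔ j = a := by
      intro j
      constructor
      · intro hj
        have hx : j ∈ Finset.filter (fun i => b i ≠ b' i) Finset.univ := by simp [hj]
        rw [ha] at hx; simpa using hx
      · rintro rfl
        have hx : j ∈ Finset.filter (fun i => b i ≠ b' i) Finset.univ := by
          rw [ha]; simp
        simpa using hx
    have hda : b a ≠ b' a := (hmem a).mpr rfl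
    refine ⟨2 * (a : ℕ), 2 * (a : ℕ) + 1, by omega, by omega, ?_⟩
    intro r
    by_cases hr : 2 * (a : ℕ) ≤ (r : ℕ) ∧ (r : ℕ) ≤ 2 * (a : ℕ) + 1
    · rw [dif_pos hr]
      have hcase : (r : ℕ) = 2 * (a : ℕ) ∨ (r : ℕ) = 2 * (a : ℕ) + 1 := by omega
      rcases hcase with hc | hc
      · rw [pairPerm_congr b' r ⟨2 * (a : ℕ), by omega⟩ hc, pairPerm_even b' a.val a.isLt,
          pairPerm_congr b ⟨2 * (a : ℕ) + (2 * (a : ℕ) + 1) - (r : ℕ), by omega⟩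
            ⟨2 * (a : ℕ) + 1, by omega⟩ (by simp only [Fin.val_mk]; omega),
          pairPerm_odd b a.val a.isLt]
        simp only [Fin.eta]
        cases hb : b a <;> cases hb' : b' a <;> simp [hb, hb'] <;> simp [hb, hb'] at hda
      · rw [pairPerm_congr b' r ⟨2 * (a : ℕ) + 1, by omega⟩ hc, pairPerm_odd b' a.val a.isLt,
          pairPerm_congr b ⟨2 * (a : ℕ) + (2 * (a : ℕ) + 1) - (r : ℕ), by omega⟩
            ⟨2 * (a : ℕ), by omega⟩ (by simp only [Fin.val_mk]; omega),
          pairPerm_even b a.val a.isLt]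
        simp only [Fin.eta]
        cases hb : b a <;> cases hb' : b' a <;> simp [hb, hb'] <;> simp [hb, hb'] at hda
    · rw [dif_neg hr]
      have hne : (⟨(r : ℕ) / 2, by omega⟩ : Fin n) ≠ a := by
        intro hc
        apply hr
        have hv : (r : ℕ) / 2 = (a : ℕ) := congrArg Fin.val hc
        omega
      have hbb : b ⟨(r : ℕ) / 2, by omega⟩ = b' ⟨(r : ℕ) / 2, by omega⟩ := by
        by_contra hc
        exact hne ((hmem _).mp hc)
      simp only [pairPerm, hbb]
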